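/- arXiv:2205.15486 — 2 statements merged into one kernel-verified Lean document; each statement's English description precedes it below -/
import Mathlib

section
/- Let C be a category possessing a terminal object. Then the groupoid reflection of C — the localization of C obtained by formally inverting every morphism of C (the localization of C at the morphism property consisting of all morphisms) — is a contractible groupoid, i.e., it is equivalent to the terminal category (the category with one object and only its identity morphism). -/
/-!
A terminal object `T` exhibits the point as a reflective subcategory of `C`:
`Functor.star C ⊣ Functor.fromPUnit T`, and the right adjoint is fully faithful. A reflector is a
localization at the morphisms it inverts, and `Functor.star C` inverts every morphism. So the point
and the groupoid reflection are both localizations of `C` at all morphisms, hence equivalent.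
-/

open CategoryTheory

section

universe w

variable {C : Type*} [Category C] {T : C}

instance : (Functor.fromPUnit.{w} T).Faithful where
  map_injective _ := Subsingleton.elim _ _

namespace CategoryTheory.Limits.IsTerminal

def starAdjFromPUnit (hT : IsTerminal T) : Functor.star C ⊣ Functor.fromPUnit.{w} T :=
  Adjunction.mkOfUnitCounit
    { unit := { app X := hT.from X, naturality _ _ _ := hT.hom_ext _ _ }
      counit := 𝟙 _
      left_triangle := Subsingleton.elim _ _
      right_triangle := by ext; exact hT.hom_ext _ _ }

lemma full_fromPUnit (hT : IsTerminal T) : (Functor.fromPUnit.{w} T).Full where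
  map_surjective _ := ⟨eqToHom (Subsingleton.elim _ _), hT.hom_ext _ _⟩

lemma isLocalization_star (hT : IsTerminal T) : (Functor.star.{w} C).IsLocalization ⊤ := by
  have := hT.full_fromPUnit.{w}
  have hW : (MorphismProperty.isomorphisms _).inverseImage (Functor.star.{w} C) = ⊤ := by
    rw [(isGroupoid_iff_isomorphisms_eq_top _).mp inferInstance, MorphismProperty.inverseImage_top]
  exact hW ▸ hT.starAdjFromPUnit.isLocalization

end CategoryTheory.Limits.IsTerminal

end

/-- The groupoid reflection of a category with a terminal object, i.e. its
localization at the class of all morphisms, is a contractible groupoid: it is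
equivalent to the terminal category. -/
theorem groupoidReflection_contractible_of_terminal {C : Type*} [Category C]
    [Limits.HasTerminal C] :
    Nonempty ((⊤ : MorphismProperty C).Localization ≌ Discrete PUnit) := by
  have := Limits.terminalIsTerminal.isLocalization_star (C := C)
  exact ⟨Localization.uniq (⊤ : MorphismProperty C).Q (Functor.star C) ⊤⟩
end

section
/- Let α be a type equipped with a strict partial order ≺ (irreflexive, transitive, hence asymmetric). Define a rewrite relation → on lists over α by: l → l' if and only if there exist lists u, v and elements a, b ∈ α with b ≺ a such that l = u ++ [a, b] ++ v and l' = u ++ [b, a] ++ v. Call a list a normal form if it admits no rewrite, i.e., it contains no adjacent pair of entries a followed by b with b ≺ a. Then every list l reduces to a unique normal form: there exists exactly one normal form n with l →* n, where →* denotes the reflexive-transitive closure of →. -/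
/-- The adjacent-swap rewrite relation on lists over `α` induced by a relation
`r`: `l` rewrites to `l'` iff `l = u ++ [a, b] ++ v` and `l' = u ++ [b, a] ++ v`
for some `u, v, a, b` with `b ≺ a` (here `r b a`). -/
def SwapStep {α : Type*} (r : α → α → Prop) (l l' : List α) : Prop :=
  ∃ (u v : List α) (a b : α), r b a ∧ l = u ++ [a, b] ++ v ∧ l' = u ++ [b, a] ++ v

/-- A list is a normal form if no adjacent-swap rewrite applies to it. -/
def IsNormalForm {α : Type*} (r : α → α → Prop) (l : List α) : Prop :=
  ∀ l' : List α, ¬ SwapStep r l l'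

/-!
Every swap removes exactly one inversion, so the rewrite system terminates. Local confluence
holds: disjoint swaps commute, and the only overlap, `a b c` with `c ≺ b ≺ a`, is closed by
transitivity (`c ≺ a`), both sides reaching `c b a`. Newman's lemma then gives confluence, hence
existence and uniqueness of normal forms.
-/

namespace Relation

variable {α : Type*} {r : α → α → Prop}

theorem exists_reflTransGen_normal (hwf : WellFounded (flip r)) (a : α) :
    ∃ b, ReflTransGen r a b ∧ ∀ c, ¬ r b c := by
  induction a using hwf.induction with
  | _ a ih =>
    by_cases ha : ∃ c, r a c
    · obtain ⟨c, hac⟩ := ha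
      obtain ⟨b, hcb, hb⟩ := ih c hac
      exact ⟨b, .head hac hcb, hb⟩
    · exact ⟨a, .refl, not_exists.mp ha⟩

theorem newman (hwf : WellFounded (flip r))
    (hlc : ∀ a b c, r a b → r a c → Join (ReflTransGen r) b c) {a b c : α}
    (hab : ReflTransGen r a b) (hac : ReflTransGen r a c) : Join (ReflTransGen r) b c := by
  induction a using hwf.induction generalizing b c with
  | _ a ih =>
    rcases hab.cases_head with rfl | ⟨b₁, hab₁, hb₁b⟩
    · exact ⟨c, hac, .refl⟩
    rcases hac.cases_head with rfl | ⟨c₁, hac₁, hc₁c⟩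
    · exact ⟨b, .refl, .head hab₁ hb₁b⟩
    obtain ⟨d, hb₁d, hc₁d⟩ := hlc a b₁ c₁ hab₁ hac₁
    obtain ⟨e, hbe, hde⟩ := ih b₁ hab₁ hb₁b hb₁d
    obtain ⟨f, hef, hcf⟩ := ih c₁ hac₁ (hc₁d.trans hde) hc₁c
    exact ⟨f, hbe.trans hef, hcf⟩

theorem ReflTransGen.eq_of_normal {a b : α} (ha : ∀ c, ¬ r a c) (hab : ReflTransGen r a b) :
    b = a := by
  rcases hab.cases_head with rfl | ⟨c, hac, -⟩
  · rfl
  · exact absurd hac (ha c)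

theorem existsUnique_normal (hwf : WellFounded (flip r))
    (hlc : ∀ a b c, r a b → r a c → Join (ReflTransGen r) b c) (a : α) :
    ∃! b, (∀ c, ¬ r b c) ∧ ReflTransGen r a b := by
  obtain ⟨b, hab, hb⟩ := exists_reflTransGen_normal hwf a
  refine ⟨b, ⟨hb, hab⟩, fun b' ⟨hb', hab'⟩ => ?_⟩
  obtain ⟨d, hb'd, hbd⟩ := newman hwf hlc hab' hab
  rw [← hb'd.eq_of_normal hb', hbd.eq_of_normal hb]

end Relation

inductive AdjSwap {α : Type*} (r : α → α → Prop) : List α → List α → Prop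
  | swap (a b : α) (v : List α) : r b a → AdjSwap r (a :: b :: v) (b :: a :: v)
  | cons (c : α) {l l' : List α} : AdjSwap r l l' → AdjSwap r (c :: l) (c :: l')

namespace AdjSwap

open Relation

variable {α : Type*} {r : α → α → Prop}

theorem swapStep_eq : SwapStep r = AdjSwap r := by
  ext l l'
  constructor
  · rintro ⟨u, v, a, b, hr, rfl, rfl⟩
    induction u with
    | nil => exact swap a b v hr
    | cons c u ih => exact cons c ih
  · intro h
    induction h with
    | swap a b v hr => exact ⟨[], v, a, b, hr, rfl, rfl⟩
    | cons c _ ih =>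
      obtain ⟨u, v, a, b, hr, rfl, rfl⟩ := ih
      exact ⟨c :: u, v, a, b, hr, rfl, rfl⟩

theorem perm {l l' : List α} (h : AdjSwap r l l') : l'.Perm l := by
  induction h with
  | swap a b v _ => exact .swap a b v
  | cons c _ ih => exact ih.cons c

theorem reflTransGen_cons (c : α) {l l' : List α} (h : ReflTransGen (AdjSwap r) l l') :
    ReflTransGen (AdjSwap r) (c :: l) (c :: l') :=
  h.lift (c :: ·) fun _ _ => cons c

open Classical in
noncomputable def inversions (r : α → α → Prop) : List α → ℕ
  | [] => 0
  | a :: t => t.countP (fun b => r b a) + inversions r t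

theorem inversions_lt (hasym : ∀ a b, r a b → ¬ r b a) {l l' : List α} (h : AdjSwap r l l') :
    inversions r l' < inversions r l := by
  classical
  induction h with
  | swap a b v hr =>
    have hab : ¬ r a b := hasym b a hr
    simp only [inversions, List.countP_cons_of_neg, List.countP_cons_of_pos, decide_eq_true_eq,
      hr, hab, not_false_eq_true]
    omega
  | cons c h ih =>
    have hcount := h.perm.countP_eq (fun b => decide (r b c))
    simp only [inversions]
    omega

theorem wellFounded_flip (hasym : ∀ a b, r a b → ¬ r b a) : WellFounded (flip (AdjSwap r)) :=
  Subrelation.wf (fun h => inversions_lt hasym h) (measure (inversions r)).wf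

theorem join_of_overlap (htrans : ∀ a b c, r a b → r b c → r a c) {a b c : α} (v : List α)
    (hba : r b a) (hcb : r c b) :
    Join (ReflTransGen (AdjSwap r)) (b :: a :: c :: v) (a :: c :: b :: v) := by
  have hca : r c a := htrans c b a hcb hba
  refine ⟨c :: b :: a :: v, ?_, ?_⟩
  · exact .head (cons b (swap a c v hca)) (.single (swap b c (a :: v) hcb))
  · exact .head (swap a c (b :: v) hca) (.single (cons c (swap a b v hba)))

theorem join (htrans : ∀ a b c, r a b → r b c → r a c) {l l₁ l₂ : List α}
    (h₁ : AdjSwap r l l₁) (h₂ : AdjSwap r l l₂) :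
    Join (ReflTransGen (AdjSwap r)) l₁ l₂ := by
  induction h₁ generalizing l₂ with
  | swap a b v hba =>
    cases h₂ with
    | swap => exact ⟨_, .refl, .refl⟩
    | cons _ h =>
      cases h with
      | swap _ c v hcb => exact join_of_overlap htrans v hba hcb
      | cons _ h => exact ⟨_, .single (cons b (cons a h)), .single (swap a b _ hba)⟩
  | cons c h ih =>
    cases h₂ with
    | swap _ b v hbc =>
      cases h with
      | swap _ d v hdb =>
        obtain ⟨m, h₂m, h₁m⟩ := join_of_overlap htrans v hbc hdb
        exact ⟨m, h₁m, h₂m⟩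
      | cons _ h => exact ⟨_, .single (swap c b _ hbc), .single (cons b (cons c h))⟩
    | cons _ h₂ =>
      obtain ⟨m, h₁m, h₂m⟩ := ih h₂
      exact ⟨c :: m, reflTransGen_cons c h₁m, reflTransGen_cons c h₂m⟩

end AdjSwap

/-- If `≺` is a strict partial order (irreflexive and transitive, hence
asymmetric), every list reduces under the adjacent-swap rewrite relation to a
unique normal form. -/
theorem swapStep_unique_normal_form {α : Type*} (r : α → α → Prop)
    (hirr : ∀ a, ¬ r a a)
    (htrans : ∀ a b c, r a b → r b c → r a c) :
    ∀ l : List α, ∃! n : List α,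
      IsNormalForm r n ∧ Relation.ReflTransGen (SwapStep r) l n := by
  have hasym : ∀ a b, r a b → ¬ r b a := fun a b hab hba => hirr a (htrans a b a hab hba)
  unfold IsNormalForm
  rw [AdjSwap.swapStep_eq]
  exact Relation.existsUnique_normal (AdjSwap.wellFounded_flip hasym)
    (fun _ _ _ => AdjSwap.join htrans)
end
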